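/- arXiv:2605.11201 — 4 statements merged into one kernel-verified Lean document; each statement's English description precedes it below -/
import Mathlib

section
/- Let m ≥ 2 be even, n divisible by m/2, N = 2n/m, and let k be an integer with 2 ≤ k ≤ N/2. A search point x ∈ {0,1}^n is Pareto-optimal for m-OJZJ_k if and only if for every block index j ∈ {1, …, m/2} the number of one-bits of the j-th block satisfies |x^j|_1 ∈ {0} ∪ {k, k+1, …, N−k} ∪ {N}. -/
/-- Number of one-bits of a block `b ∈ {0,1}^N`. -/
def ones {N : ℕ} (b : Fin N → Bool) : ℕ :=
  (Finset.univ.filter fun i => b i = true).card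

/-- Number of zero-bits of a block `b ∈ {0,1}^N`. -/
def zeros {N : ℕ} (b : Fin N → Bool) : ℕ :=
  (Finset.univ.filter fun i => b i = false).card

/-- A search point in `{0,1}^n` with `n = M * N`, presented as `M` blocks of length `N`. -/
abbrev Point (M N : ℕ) := Fin M → Fin N → Bool

/-- The `m`-objective function `m`-OJZJ_k with `m = 2 * M` objectives (0-indexed:
objective `i` corresponds to the 1-indexed objective `i+1`, so even `i` is the
"ones" objective and odd `i` the "zeros" objective of block `i / 2`). -/
def mOJZJ (N k : ℕ) {M : ℕ} (x : Point M N) (i : Fin (2 * M)) : ℕ :=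
  let b := x ⟨i.val / 2, by have := i.isLt; omega⟩
  if i.val % 2 = 0 then
    if ones b ≤ N - k ∨ ones b = N then k + ones b else N - ones b
  else
    if zeros b ≤ N - k ∨ zeros b = N then k + zeros b else N - zeros b

/-- `x` weakly dominates `y`. -/
def weaklyDom (N k : ℕ) {M : ℕ} (x y : Point M N) : Prop :=
  ∀ i, mOJZJ N k y i ≤ mOJZJ N k x i

/-- `x` dominates `y`. -/
def dom (N k : ℕ) {M : ℕ} (x y : Point M N) : Prop :=
  weaklyDom N k x y ∧ ∃ i, mOJZJ N k y i < mOJZJ N k x i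

/-- `x` is Pareto-optimal: no search point dominates it. -/
def paretoOptimal (N k : ℕ) {M : ℕ} (x : Point M N) : Prop :=
  ¬ ∃ y : Point M N, dom N k y x

/-- The Pareto front: the set of fitness vectors of Pareto-optimal search points. -/
def paretoFront (N k M : ℕ) : Set (Fin (2 * M) → ℕ) :=
  {v | ∃ x : Point M N, paretoOptimal N k x ∧ mOJZJ N k x = v}

lemma ones_le {N : ℕ} (b : Fin N → Bool) : ones b ≤ N := by
  classical
  have := Finset.card_filter_le (Finset.univ : Finset (Fin N)) (fun i => b i = true)
  simpa [ones] using this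

lemma ones_add_zeros {N : ℕ} (b : Fin N → Bool) : ones b + zeros b = N := by
  classical
  have h := Finset.card_filter_add_card_filter_not
    (s := (Finset.univ : Finset (Fin N))) (p := fun i => b i = true)
  have h2 : (Finset.univ.filter fun i => ¬ (b i = true)) =
      (Finset.univ.filter fun i => b i = false) := by
    apply Finset.filter_congr; intro i _; simp
  rw [h2] at h
  simpa [ones, zeros] using h

lemma ones_fun_lt {N t : ℕ} (ht : t < N) :
    ones (fun i : Fin N => decide (i.val < t)) = t := by
  classical
  have h : (Finset.univ.filter fun i : Fin N => (decide (i.val < t)) = true) =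
      Finset.Iio (⟨t, ht⟩ : Fin N) := by
    ext i; simp [Fin.lt_def]
  rw [ones, h, Fin.card_Iio]

/-- The single-objective shape of each component of `mOJZJ`. -/
def Fobj (N k o : ℕ) : ℕ := if o ≤ N - k ∨ o = N then k + o else N - o

lemma mOJZJ_eq (N k : ℕ) {M : ℕ} (x : Point M N) (i : Fin (2 * M)) :
    mOJZJ N k x i =
      if i.val % 2 = 0 then
        Fobj N k (ones (x ⟨i.val / 2, by have := i.isLt; omega⟩))
      else
        Fobj N k (N - ones (x ⟨i.val / 2, by have := i.isLt; omega⟩)) := by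
  have hz : zeros (x ⟨i.val / 2, by have := i.isLt; omega⟩) =
      N - ones (x ⟨i.val / 2, by have := i.isLt; omega⟩) := by
    have := ones_add_zeros (x ⟨i.val / 2, by have := i.isLt; omega⟩); omega
  simp only [mOJZJ, Fobj, hz]

lemma F_sum_good {N k o : ℕ} (hk : 2 ≤ k) (hN : 2 * k ≤ N)
    (h : o = 0 ∨ (k ≤ o ∧ o ≤ N - k) ∨ o = N) :
    Fobj N k o + Fobj N k (N - o) = 2 * k + N := by
  unfold Fobj; split_ifs <;> omega

lemma F_sum_le {N k o : ℕ} (hk : 2 ≤ k) (hN : 2 * k ≤ N) (ho : o ≤ N) :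
    Fobj N k o + Fobj N k (N - o) ≤ 2 * k + N := by
  unfold Fobj; split_ifs <;> omega

lemma F_lt_low {N k o : ℕ} (hk : 2 ≤ k) (hN : 2 * k ≤ N) (h1 : 1 ≤ o) (h2 : o < k) :
    Fobj N k o < Fobj N k k ∧ Fobj N k (N - o) < Fobj N k (N - k) := by
  unfold Fobj; split_ifs <;> omega

lemma F_lt_high {N k o : ℕ} (hk : 2 ≤ k) (hN : 2 * k ≤ N) (h1 : N - k < o) (h2 : o < N) :
    Fobj N k o < Fobj N k (N - k) ∧ Fobj N k (N - o) < Fobj N k (N - (N - k)) := by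
  unfold Fobj; split_ifs <;> omega

lemma mOJZJ_apply (N k : ℕ) {M : ℕ} (x : Point M N) (i : Fin (2 * M)) (j : Fin M)
    (hb : i.val / 2 = j.val) :
    mOJZJ N k x i =
      if i.val % 2 = 0 then Fobj N k (ones (x j)) else Fobj N k (N - ones (x j)) := by
  have h : (⟨i.val / 2, by have := i.isLt; omega⟩ : Fin M) = j := Fin.ext hb
  rw [mOJZJ_eq, h]

set_option maxHeartbeats 1000000 in
/-- a search point is Pareto-optimal for `m`-OJZJ_k iff every block has a
number of one-bits in `{0} ∪ {k, …, N−k} ∪ {N}`. -/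
theorem pareto_optimal_iff (m n N k : ℕ) (hm : 2 ≤ m) (hme : m % 2 = 0)
    (hn : 0 < n) (hdvd : m / 2 ∣ n) (hN : N = 2 * n / m)
    (hk2 : 2 ≤ k) (hkN : k ≤ N / 2) (x : Point (m / 2) N) :
    paretoOptimal N k x ↔
      ∀ j : Fin (m / 2),
        ones (x j) = 0 ∨ (k ≤ ones (x j) ∧ ones (x j) ≤ N - k) ∨ ones (x j) = N := by
  have hN2 : 2 * k ≤ N := by omega
  constructor
  · intro hpo j
    by_contra hbad
    apply hpo
    have hoN : ones (x j) ≤ N := ones_le _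
    have hc : (1 ≤ ones (x j) ∧ ones (x j) < k) ∨ (N - k < ones (x j) ∧ ones (x j) < N) := by
      omega
    obtain ⟨t, htN, h1, h2⟩ :
        ∃ t, t < N ∧ Fobj N k (ones (x j)) < Fobj N k t ∧
          Fobj N k (N - ones (x j)) < Fobj N k (N - t) := by
      rcases hc with ⟨ha, hb⟩ | ⟨ha, hb⟩
      · exact ⟨k, by omega, (F_lt_low hk2 hN2 ha hb).1, (F_lt_low hk2 hN2 ha hb).2⟩
      · exact ⟨N - k, by omega, (F_lt_high hk2 hN2 ha hb).1, (F_lt_high hk2 hN2 ha hb).2⟩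
    refine ⟨Function.update x j (fun i => decide (i.val < t)), ?_, ?_⟩
    · intro i
      by_cases hij : i.val / 2 = j.val
      · simp only [mOJZJ_apply N k _ i j hij, Function.update_self, ones_fun_lt htN]
        split_ifs
        · exact le_of_lt h1
        · exact le_of_lt h2
      · have hlt : i.val / 2 < m / 2 := by have := i.isLt; omega
        have hne : (⟨i.val / 2, hlt⟩ : Fin (m / 2)) ≠ j := fun h => hij (congrArg Fin.val h)
        simp only [mOJZJ_apply N k _ i ⟨i.val / 2, hlt⟩ rfl,
          Function.update_of_ne hne, le_refl]
    · refine ⟨⟨2 * j.val, by have := j.isLt; omega⟩, ?_⟩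
      have hb : (⟨2 * j.val, by have := j.isLt; omega⟩ : Fin (2 * (m / 2))).val / 2 = j.val := by
        show 2 * j.val / 2 = j.val; omega
      have hpar : (⟨2 * j.val, by have := j.isLt; omega⟩ : Fin (2 * (m / 2))).val % 2 = 0 := by
        show 2 * j.val % 2 = 0; omega
      simp only [mOJZJ_apply N k _ _ j hb, if_pos hpar, Function.update_self,
        ones_fun_lt htN]
      exact h1
  · intro hgood
    rintro ⟨y, hw, i, hi⟩
    have key : ∀ j : Fin (m / 2), Fobj N k (ones (x j)) = Fobj N k (ones (y j)) ∧
        Fobj N k (N - ones (x j)) = Fobj N k (N - ones (y j)) := by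
      intro j
      have he := hw ⟨2 * j.val, by have := j.isLt; omega⟩
      have hodd := hw ⟨2 * j.val + 1, by have := j.isLt; omega⟩
      have hb : (⟨2 * j.val, by have := j.isLt; omega⟩ : Fin (2 * (m / 2))).val / 2 = j.val := by
        show 2 * j.val / 2 = j.val; omega
      have hb2 : (⟨2 * j.val + 1, by have := j.isLt; omega⟩ :
          Fin (2 * (m / 2))).val / 2 = j.val := by
        show (2 * j.val + 1) / 2 = j.val; omega
      have hpar : (⟨2 * j.val, by have := j.isLt; omega⟩ : Fin (2 * (m / 2))).val % 2 = 0 := by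
        show 2 * j.val % 2 = 0; omega
      have hpar2 : ¬ ((⟨2 * j.val + 1, by have := j.isLt; omega⟩ :
          Fin (2 * (m / 2))).val % 2 = 0) := by
        show ¬ ((2 * j.val + 1) % 2 = 0); omega
      simp only [mOJZJ_apply N k _ _ j hb, if_pos hpar] at he
      simp only [mOJZJ_apply N k _ _ j hb2, if_neg hpar2] at hodd
      have hsx : Fobj N k (ones (x j)) + Fobj N k (N - ones (x j)) = 2 * k + N :=
        F_sum_good hk2 hN2 (hgood j)
      have hsy : Fobj N k (ones (y j)) + Fobj N k (N - ones (y j)) ≤ 2 * k + N :=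
        F_sum_le hk2 hN2 (ones_le _)
      omega
    have hlt : i.val / 2 < m / 2 := by have := i.isLt; omega
    rcases key ⟨i.val / 2, hlt⟩ with ⟨k1, k2⟩
    simp only [mOJZJ_apply N k _ i ⟨i.val / 2, hlt⟩ rfl] at hi
    by_cases hpar : i.val % 2 = 0
    · simp only [if_pos hpar] at hi; omega
    · simp only [if_neg hpar] at hi; omega
end

section
/- Let m ≥ 2 be even, n divisible by m/2, N = 2n/m, and let k be an integer with 2 ≤ k ≤ N/2. Every set S ⊆ {0,1}^n of pairwise incomparable search points with respect to m-OJZJ_k satisfies |S| ≤ (N + 1)^{m/2}; moreover, there exists a set S of pairwise incomparable search points with |S| = (N − 2k + 3)^{m/2}, the cardinality of the Pareto front. -/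
lemma mOJZJ_eq_of_ones {N k M : ℕ} (x y : Point M N)
    (h : ∀ j, ones (x j) = ones (y j)) : mOJZJ N k x = mOJZJ N k y := by
  funext i
  have hz : ∀ j, zeros (x j) = zeros (y j) := by
    intro j
    have h1 := ones_add_zeros (x j)
    have h2 := ones_add_zeros (y j)
    have := h j; omega
  unfold mOJZJ
  simp only [h, hz]

lemma card_filter_val_lt {N : ℕ} (c : ℕ) (h : c ≤ N) :
    (Finset.univ.filter fun i : Fin N => i.val < c).card = c := by
  classical
  rw [← Finset.card_range c]
  apply Finset.card_bij (fun i _ => i.val)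
  · intro a ha; simp only [Finset.mem_filter] at ha; simpa using ha.2
  · intro a _ b _ hab; exact Fin.val_injective hab
  · intro j hj
    simp only [Finset.mem_range] at hj
    exact ⟨⟨j, lt_of_lt_of_le hj h⟩, by simp [hj], rfl⟩

def pointOf {M N : ℕ} (v : Fin M → ℕ) : Point M N := fun j i => decide (i.val < v j)

lemma ones_pointOf {M N : ℕ} (v : Fin M → ℕ) (j : Fin M) (h : v j ≤ N) :
    ones ((pointOf v : Point M N) j) = v j := by
  unfold ones pointOf
  simp only [decide_eq_true_eq]
  exact card_filter_val_lt (v j) h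

lemma mOJZJ_pointOf_even {M N k : ℕ} (v : Fin M → ℕ) (j : Fin M) (hvN : v j ≤ N)
    (hcond : v j ≤ N - k ∨ v j = N) :
    mOJZJ N k (pointOf v : Point M N) ⟨2 * j.val, by have := j.isLt; omega⟩ = k + v j := by
  have hb : (⟨2 * j.val / 2, by have := j.isLt; omega⟩ : Fin M) = j := by
    ext; simp [Nat.mul_div_cancel_left]
  unfold mOJZJ
  simp only [hb]
  rw [if_pos (by omega : 2 * j.val % 2 = 0)]
  rw [ones_pointOf v j hvN, if_pos hcond]

lemma zeros_pointOf {M N : ℕ} (v : Fin M → ℕ) (j : Fin M) (h : v j ≤ N) :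
    zeros ((pointOf v : Point M N) j) = N - v j := by
  have h1 := ones_add_zeros ((pointOf v : Point M N) j)
  have h2 := ones_pointOf (N := N) v j h
  omega

lemma mOJZJ_pointOf_odd {M N k : ℕ} (v : Fin M → ℕ) (j : Fin M) (hvN : v j ≤ N)
    (hcond : N - v j ≤ N - k ∨ N - v j = N) :
    mOJZJ N k (pointOf v : Point M N) ⟨2 * j.val + 1, by have := j.isLt; omega⟩
      = k + (N - v j) := by
  have hb : (⟨(2 * j.val + 1) / 2, by have := j.isLt; omega⟩ : Fin M) = j := by
    ext; simp; omega
  unfold mOJZJ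
  simp only [hb]
  rw [if_neg (by omega : ¬ (2 * j.val + 1) % 2 = 0)]
  rw [zeros_pointOf v j hvN, if_pos hcond]

lemma notWeaklyDom_of_lt {M N k : ℕ} (v w : Fin M → ℕ)
    (hv : ∀ j, v j ≤ N ∧ (v j ≤ N - k ∨ v j = N) ∧ (N - v j ≤ N - k ∨ N - v j = N))
    (hw : ∀ j, w j ≤ N ∧ (w j ≤ N - k ∨ w j = N) ∧ (N - w j ≤ N - k ∨ N - w j = N))
    (j : Fin M) (hlt : v j < w j) :
    ¬ weaklyDom N k (pointOf v : Point M N) (pointOf w) ∧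
    ¬ weaklyDom N k (pointOf w : Point M N) (pointOf v) := by
  constructor
  · intro h
    have := h ⟨2 * j.val, by have := j.isLt; omega⟩
    rw [mOJZJ_pointOf_even v j (hv j).1 (hv j).2.1,
        mOJZJ_pointOf_even w j (hw j).1 (hw j).2.1] at this
    omega
  · intro h
    have := h ⟨2 * j.val + 1, by have := j.isLt; omega⟩
    rw [mOJZJ_pointOf_odd v j (hv j).1 (hv j).2.2,
        mOJZJ_pointOf_odd w j (hw j).1 (hw j).2.2] at this
    have := (hw j).1
    omega


/-- any set of pairwise incomparable search points has size at most
`(N + 1)^(m/2)`, and there is such a set of size `(N − 2k + 3)^(m/2)`,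
the cardinality of the Pareto front. -/
theorem incomparable_set_bounds (m n N k : ℕ) (hm : 2 ≤ m) (hme : m % 2 = 0)
    (hn : 0 < n) (hdvd : m / 2 ∣ n) (hN : N = 2 * n / m)
    (hk2 : 2 ≤ k) (hkN : k ≤ N / 2) :
    (∀ S : Set (Point (m / 2) N),
        (∀ x ∈ S, ∀ y ∈ S, x ≠ y → ¬ weaklyDom N k x y ∧ ¬ weaklyDom N k y x) →
        S.ncard ≤ (N + 1) ^ (m / 2)) ∧
    (∃ S : Set (Point (m / 2) N),
        (∀ x ∈ S, ∀ y ∈ S, x ≠ y → ¬ weaklyDom N k x y ∧ ¬ weaklyDom N k y x) ∧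
        S.ncard = (N - 2 * k + 3) ^ (m / 2)) := by
  classical
  set M := m / 2 with hM
  have hkk : 2 * k ≤ N := by omega
  constructor
  · -- upper bound
    intro S hS
    have key : S.ncard ≤ (Set.univ : Set (Fin M → Fin (N + 1))).ncard := by
      apply Set.ncard_le_ncard_of_injOn
        (fun x j => (⟨ones (x j), Nat.lt_succ_of_le (ones_le _)⟩ : Fin (N + 1)))
      · intro a _; trivial
      · intro a ha b hb hab
        by_contra hne
        have hones : ∀ j, ones (a j) = ones (b j) := by
          intro j
          have := congrFun hab j
          exact Fin.mk.inj_iff.mp this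
        have heq := mOJZJ_eq_of_ones (N := N) (k := k) a b hones
        exact (hS a ha b hb hne).1 (fun i => le_of_eq (congrFun heq i).symm)
    rwa [Set.ncard_univ, Nat.card_eq_fintype_card, Fintype.card_fun,
      Fintype.card_fin, Fintype.card_fin] at key
  · -- construction
    set A : Finset ℕ := insert 0 (insert N (Finset.Icc k (N - k))) with hA
    have hAcard : A.card = N - 2 * k + 3 := by
      rw [Finset.card_insert_of_notMem
            (by simp only [Finset.mem_insert, Finset.mem_Icc, not_or]; omega),
          Finset.card_insert_of_notMem
            (by simp only [Finset.mem_Icc, not_and, not_le]; omega),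
          Nat.card_Icc]
      omega
    have hAgood : ∀ a ∈ A, a ≤ N ∧ (a ≤ N - k ∨ a = N) ∧ (N - a ≤ N - k ∨ N - a = N) := by
      intro a ha
      simp only [hA, Finset.mem_insert, Finset.mem_Icc] at ha
      rcases ha with rfl | rfl | ⟨h1, h2⟩ <;> refine ⟨by omega, by omega, by omega⟩
    set T : Finset (Fin M → ℕ) := Fintype.piFinset fun _ => A with hT
    have hTmem : ∀ v ∈ T, ∀ j, v j ≤ N ∧ (v j ≤ N - k ∨ v j = N) ∧
        (N - v j ≤ N - k ∨ N - v j = N) := by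
      intro v hv j
      exact hAgood _ (Fintype.mem_piFinset.mp hv j)
    refine ⟨(fun v => (pointOf v : Point M N)) '' ↑T, ?_, ?_⟩
    · rintro x ⟨v, hv, rfl⟩ y ⟨w, hw, rfl⟩ hne
      have hvw : v ≠ w := fun h => hne (by rw [h])
      obtain ⟨j, hj⟩ := Function.ne_iff.mp hvw
      rcases lt_or_gt_of_ne hj with h | h
      · exact notWeaklyDom_of_lt v w (hTmem v hv) (hTmem w hw) j h
      · exact (notWeaklyDom_of_lt w v (hTmem w hw) (hTmem v hv) j h).symm
    · have hinj : Set.InjOn (fun v => (pointOf v : Point M N)) ↑T := by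
        intro v hv w hw h
        funext j
        have h1 := ones_pointOf (N := N) v j (hTmem v hv j).1
        have h2 := ones_pointOf (N := N) w j (hTmem w hw j).1
        have h' : (pointOf v : Point M N) = pointOf w := h
        rw [← h1, ← h2, congrFun h' j]
      rw [Set.ncard_image_of_injOn hinj, Set.ncard_coe_finset, hT,
        Fintype.card_piFinset, Finset.prod_const, hAcard, Finset.card_univ,
        Fintype.card_fin]
end

section
/- Let m ≥ 2 be even, n divisible by m/2, N = 2n/m, and let k be an integer with 2 ≤ k ≤ N/2. Let j ∈ {1, …, m/2} and let x, z ∈ {0,1}^n satisfy |x^i|_1 = |z^i|_1 for every i ∈ {1, …, m/2} with i ≠ j, together with k ≤ |x^j|_1 ≤ N − k and |z^j|_1 ∈ {1, …, k−1} ∪ {N−k+1, …, N−1}. Then x dominates z with respect to m-OJZJ_k. -/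
lemma block_strict (N k : ℕ) (hk2 : 2 ≤ k) (hNk : 2 * k ≤ N)
    (bx bz : Fin N → Bool)
    (hx : k ≤ ones bx ∧ ones bx ≤ N - k)
    (hz : (1 ≤ ones bz ∧ ones bz ≤ k - 1) ∨
      (N - k + 1 ≤ ones bz ∧ ones bz ≤ N - 1)) :
    ((if ones bz ≤ N - k ∨ ones bz = N then k + ones bz else N - ones bz) <
      (if ones bx ≤ N - k ∨ ones bx = N then k + ones bx else N - ones bx)) ∧
    ((if zeros bz ≤ N - k ∨ zeros bz = N then k + zeros bz else N - zeros bz) <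
      (if zeros bx ≤ N - k ∨ zeros bx = N then k + zeros bx else N - zeros bx)) := by
  have h1 := ones_add_zeros bx
  have h2 := ones_add_zeros bz
  constructor <;> split_ifs <;> omega

/-- if `x` and `z` have the same number of one-bits in all blocks except block `j`,
where `k ≤ |x^j|_1 ≤ N − k` while `|z^j|_1 ∈ {1, …, k−1} ∪ {N−k+1, …, N−1}`,
then `x` dominates `z`. -/
theorem block_dominates (m n N k : ℕ) (hm : 2 ≤ m) (hme : m % 2 = 0)
    (hn : 0 < n) (hdvd : m / 2 ∣ n) (hN : N = 2 * n / m)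
    (hk2 : 2 ≤ k) (hkN : k ≤ N / 2)
    (j : Fin (m / 2)) (x z : Point (m / 2) N)
    (heq : ∀ i : Fin (m / 2), i ≠ j → ones (x i) = ones (z i))
    (hxj : k ≤ ones (x j) ∧ ones (x j) ≤ N - k)
    (hzj : (1 ≤ ones (z j) ∧ ones (z j) ≤ k - 1) ∨
      (N - k + 1 ≤ ones (z j) ∧ ones (z j) ≤ N - 1)) :
    dom N k x z := by
  have hNk : 2 * k ≤ N := by omega
  have hb := block_strict N k hk2 hNk (x j) (z j) hxj hzj
  have hkey : ∀ i : Fin (2 * (m / 2)), mOJZJ N k z i ≤ mOJZJ N k x i := by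
    intro i
    have hlt : i.val / 2 < m / 2 := by have := i.isLt; omega
    set p : Fin (m / 2) := ⟨i.val / 2, hlt⟩ with hp
    by_cases hpj : p = j
    · unfold mOJZJ
      simp only [← hp, hpj]
      by_cases h : i.val % 2 = 0
      · simp only [h, if_pos rfl]; exact le_of_lt hb.1
      · simp only [h, if_neg]; exact le_of_lt hb.2
    · have he : ones (x p) = ones (z p) := heq p hpj
      have hz : zeros (x p) = zeros (z p) := by
        have h1 := ones_add_zeros (x p)
        have h2 := ones_add_zeros (z p)
        omega
      unfold mOJZJ
      simp only [← hp, he, hz]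
      exact le_rfl
  refine ⟨hkey, ⟨⟨2 * j.val, by have := j.isLt; omega⟩, ?_⟩⟩
  have hj2 : (2 * j.val) / 2 = j.val := by omega
  have hmod : (2 * j.val) % 2 = 0 := by omega
  unfold mOJZJ
  simp only [hmod, if_pos rfl]
  have hfin : ∀ (h : (2 * j.val) / 2 < m / 2),
      (⟨(2 * j.val) / 2, h⟩ : Fin (m/2)) = j := by
    intro h; ext; simp [hj2]
  rw [hfin]
  exact hb.1
end

section
/- For every positive integer n, the real function ρ defined on the open interval (0, n/2) by ρ(x) = (x/2)·(2n/x)^{2x} is strictly monotone increasing. -/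
/-! Write `ρ x = (x / 2) · (2n / x) ^ (2x)`. The second factor is `exp (2 · x log (2n / x))`, and
`x ↦ x log (c / x)` has derivative `log (c / x) - 1`, positive for `x < c / e`. Since `e < 4`, the
interval `(0, n / 2)` lies inside `(0, 2n / e)`, so `ρ` is a product of two positive increasing
factors, the first of them strictly increasing. -/

open Real Set

lemma hasDerivAt_mul_log_div {c x : ℝ} (hc : c ≠ 0) (hx : x ≠ 0) :
    HasDerivAt (fun y => y * log (c / y)) (log (c / x) - 1) x := by
  have hdiv : HasDerivAt (fun y => c / y) (-c / x ^ 2) x := by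
    simpa [div_eq_mul_inv, neg_div] using (hasDerivAt_inv hx).const_mul c
  refine ((hasDerivAt_id' x).mul (hdiv.log (div_ne_zero hc hx))).congr_deriv ?_
  field_simp
  ring

lemma pos_of_mem_Ioc_div_exp {c x : ℝ} (hx : x ∈ Ioc 0 (c / exp 1)) : 0 < c :=
  (div_pos_iff_of_pos_right (exp_pos 1)).1 (hx.1.trans_le hx.2)

lemma strictMonoOn_mul_log_div (c : ℝ) :
    StrictMonoOn (fun x => x * log (c / x)) (Ioc 0 (c / exp 1)) := by
  have hderiv : ∀ x ∈ Ioc 0 (c / exp 1),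
      HasDerivAt (fun y => y * log (c / y)) (log (c / x) - 1) x := fun x hx =>
    hasDerivAt_mul_log_div (pos_of_mem_Ioc_div_exp hx).ne' hx.1.ne'
  refine strictMonoOn_of_hasDerivWithinAt_pos (convex_Ioc _ _)
    (fun x hx => (hderiv x hx).continuousAt.continuousWithinAt)
    (fun x hx => (hderiv x (interior_subset hx)).hasDerivWithinAt) fun x hx => ?_
  rw [interior_Ioc] at hx
  have hcx : exp 1 < c / x := by
    rw [lt_div_iff₀ hx.1, mul_comm, ← lt_div_iff₀ (exp_pos 1)]
    exact hx.2
  have := (lt_log_iff_exp_lt ((exp_pos 1).trans hcx)).2 hcx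
  linarith

lemma strictMonoOn_div_rpow_const_mul {a : ℝ} (c : ℝ) (ha : 0 < a) :
    StrictMonoOn (fun x => (c / x) ^ (a * x)) (Ioc 0 (c / exp 1)) := by
  have hpos : ∀ x ∈ Ioc 0 (c / exp 1), 0 < c / x := fun x hx =>
    div_pos (pos_of_mem_Ioc_div_exp hx) hx.1
  intro x hx y hy hxy
  simp only [rpow_def_of_pos (hpos x hx), rpow_def_of_pos (hpos y hy), exp_lt_exp]
  have := mul_lt_mul_of_pos_left (strictMonoOn_mul_log_div c hx hy hxy) ha
  linarith

theorem rho_strictMonoOn_general (n : ℕ) :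
    StrictMonoOn (fun x : ℝ => x / 2 * (2 * n / x) ^ (2 * x)) (Set.Ioo 0 ((n : ℝ) / 2)) := by
  have hsub : Ioo 0 ((n : ℝ) / 2) ⊆ Ioc 0 (2 * n / exp 1) := fun x hx => by
    have hn : (0 : ℝ) < n := by linarith [hx.1, hx.2]
    refine ⟨hx.1, hx.2.le.trans ?_⟩
    rw [le_div_iff₀ (exp_pos 1)]
    nlinarith [exp_one_lt_d9]
  have hpow := (strictMonoOn_div_rpow_const_mul (2 * n : ℝ) two_pos).mono hsub
  intro x hx y hy hxy
  exact mul_lt_mul (by linarith) (hpow.monotoneOn hx hy hxy.le)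
    (rpow_pos_of_pos (div_pos (by linarith [hx.1, hx.2]) hx.1) _) (by linarith [hy.1])

/-- for `n ∈ ℕ+`, the function `x ↦ (x/2)·(2n/x)^(2x)` is strictly monotone
increasing on `(0, n/2)`. -/
theorem rho_strictMonoOn (n : ℕ) (hn : 0 < n) :
    StrictMonoOn (fun x : ℝ => x / 2 * (2 * n / x) ^ (2 * x)) (Set.Ioo 0 ((n : ℝ) / 2)) :=
  rho_strictMonoOn_general n
end
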